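/- Let p be a prime, let N ≥ M ≥ 1 be integers, and let Φ = (φ_{j,k}) ∈ GL_N(ℤ). Let A = ℚ[x_{j,i} : j ∈ {1,…,N}, i ≥ 1] and, in A[[t]], put F_j(t) = 1 + Σ_{i≥1} x_{j,i} t^i for each j. For each k ∈ {1,…,M} set X_k(t) = ∏_{j=1}^N F_j(t)^{φ_{j,k}}, let U_k and V_k be the p-singular and p-regular parts of X_k, and set Y_k(t) = V_k(t)·U_k(t)^{-1} = Σ_{n≥0} y_{k,n} t^n. Then the family {y_{k,n} : 1 ≤ k ≤ M, n ≥ 1, p ∤ n} is algebraically independent over ℚ. -/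

import Mathlib

open PowerSeries

noncomputable def pSingularPart {R : Type*} [CommRing R] (p : ℕ) (F : PowerSeries R) :
    PowerSeries R :=
  PowerSeries.mk fun n => if p ∣ n then PowerSeries.coeff n F else 0

noncomputable def pRegularPart {R : Type*} [CommRing R] (p : ℕ) (F : PowerSeries R) :
    PowerSeries R :=
  PowerSeries.mk fun n => if p ∣ n then 0 else PowerSeries.coeff n F

noncomputable def psExp {R : Type*} [CommRing R] [Algebra ℚ R] (C : PowerSeries R) :
    PowerSeries R :=
  PowerSeries.mk fun n => ∑ k ∈ Finset.range (n + 1),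
    ((k.factorial : ℚ)⁻¹) • PowerSeries.coeff n (C ^ k)

/-
The variables `x_{j,i}` are free, so a ℚ-algebra endomorphism `σ` of `A` may send each `F_j`
to any series with constant term `1`. With `ψ = Φ⁻¹` and `H_k = 1 + Σ_{p ∤ n} x_{k,n} tⁿ`,
send `F_j` to `∏_l H_l ^ ψ_{l,j}`; then `σ X_k = H_k`, whose `p`-singular part is `1`, so
`σ Y_k = H_k - 1`, that is `σ y_{k,n} = x_{k,n}` for `p ∤ n`. Algebraic independence of the
`x_{k,n}` pulls back along `σ`.
-/

section PartsOfPowerSeries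

variable {R : Type*} [CommRing R] (p : ℕ)

lemma coeff_pSingularPart (F : PowerSeries R) (n : ℕ) :
    coeff n (pSingularPart p F) = if p ∣ n then coeff n F else 0 :=
  coeff_mk _ _

lemma coeff_pRegularPart (F : PowerSeries R) (n : ℕ) :
    coeff n (pRegularPart p F) = if p ∣ n then 0 else coeff n F :=
  coeff_mk _ _

lemma map_pSingularPart {S : Type*} [CommRing S] (f : R →+* S) (F : PowerSeries R) :
    map f (pSingularPart p F) = pSingularPart p (map f F) := by
  ext n
  simp [coeff_pSingularPart, apply_ite f]

lemma map_pRegularPart {S : Type*} [CommRing S] (f : R →+* S) (F : PowerSeries R) :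
    map f (pRegularPart p F) = pRegularPart p (map f F) := by
  ext n
  simp [coeff_pRegularPart, apply_ite f]

lemma constantCoeff_pRegularPart (F : PowerSeries R) : constantCoeff (pRegularPart p F) = 0 := by
  simp [← coeff_zero_eq_constantCoeff_apply, coeff_pRegularPart]

lemma pSingularPart_one_add_pRegularPart (F : PowerSeries R) :
    pSingularPart p (1 + pRegularPart p F) = 1 := by
  ext n
  by_cases hn : n = 0 <;> by_cases hpn : p ∣ n <;>
    simp [coeff_pSingularPart, coeff_pRegularPart, coeff_one, constantCoeff_pRegularPart, hn, hpn]

lemma pRegularPart_one_add_pRegularPart (F : PowerSeries R) :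
    pRegularPart p (1 + pRegularPart p F) = pRegularPart p F := by
  ext n
  by_cases hn : n = 0 <;> by_cases hpn : p ∣ n <;>
    simp [coeff_pRegularPart, coeff_one, hn, hpn]

end PartsOfPowerSeries

lemma Finset.prod_zpow_eq_zpow_sum {ι G : Type*} [CommGroup G] (s : Finset ι) (f : ι → ℤ)
    (a : G) : ∏ i ∈ s, a ^ f i = a ^ ∑ i ∈ s, f i :=
  Finset.cons_induction (by simp)
    (fun _ _ _ _ ↦ by simp [Finset.prod_cons, Finset.sum_cons, zpow_add, *]) s

lemma prod_prod_zpow_zpow_of_mul_eq_one {ι G : Type*} [Fintype ι] [DecidableEq ι] [CommGroup G]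
    {ψ Φ : Matrix ι ι ℤ} (hψΦ : ψ * Φ = 1) (h : ι → G) (k : ι) :
    ∏ j, (∏ l, h l ^ ψ l j) ^ Φ j k = h k := by
  calc ∏ j, (∏ l, h l ^ ψ l j) ^ Φ j k
      = ∏ l, ∏ j, h l ^ (ψ l j * Φ j k) := by
        rw [Finset.prod_comm]
        simp_rw [← Finset.prod_zpow, zpow_mul]
    _ = ∏ l, h l ^ (ψ * Φ) l k := by
        simp_rw [Matrix.mul_apply, Finset.prod_zpow_eq_zpow_sum]
    _ = h k := by
        simp [hψΦ, Matrix.one_apply]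

lemma map_coe_prod_zpow {ι R S : Type*} [Fintype ι] [CommRing R] [CommRing S] (f : R →+* S)
    {u : ι → Rˣ} {v : ι → Sˣ} (huv : ∀ i, f (u i) = v i) (n : ι → ℤ) :
    f ↑(∏ i, u i ^ n i) = ↑(∏ i, v i ^ n i) := by
  have hmap : ∀ i, Units.map f.toMonoidHom (u i) = v i := fun i => Units.ext (huv i)
  change ((Units.map f.toMonoidHom (∏ i, u i ^ n i) : Sˣ) : S) = _
  simp_rw [map_prod, map_zpow, hmap]

lemma constantCoeff_coe_prod_zpow {ι R : Type*} [Fintype ι] [CommRing R]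
    {u : ι → (PowerSeries R)ˣ} (hu : ∀ i, constantCoeff (u i : PowerSeries R) = 1) (n : ι → ℤ) :
    constantCoeff (↑(∏ i, u i ^ n i) : PowerSeries R) = 1 := by
  have hker : ∏ i, u i ^ n i ∈ (Units.map (constantCoeff (R := R)).toMonoidHom).ker :=
    Subgroup.prod_mem _ fun i _ => zpow_mem (Units.ext (hu i)) _
  exact congrArg Units.val hker

lemma algebraicIndependent_of_algHom_eq_X {κ σ R A : Type*} [CommRing R] [CommRing A]
    [Algebra R A] {y : κ → A} (φ : A →ₐ[R] MvPolynomial σ R) {e : κ → σ} (he : Function.Injective e)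
    (hy : ∀ i, φ (y i) = MvPolynomial.X (e i)) : AlgebraicIndependent R y := by
  refine AlgebraicIndependent.of_comp φ ?_
  rw [show φ ∘ y = MvPolynomial.X ∘ e from funext hy]
  exact (MvPolynomial.algebraicIndependent_X σ R).comp e he

section GenericSeries

variable {ι R : Type*} [CommRing R]

noncomputable def genericSeries (j : ι) : PowerSeries (MvPolynomial (ι × ℕ+) R) :=
  mk fun i => if h : 0 < i then MvPolynomial.X (j, ⟨i, h⟩) else 1

lemma map_aeval_genericSeries {S : Type*} [CommRing S] [Algebra R S] (g : ι → PowerSeries S)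
    (hg : ∀ j, constantCoeff (g j) = 1) (j : ι) :
    map (MvPolynomial.aeval (R := R) fun ji : ι × ℕ+ => coeff (ji.2 : ℕ) (g ji.1) :
      MvPolynomial (ι × ℕ+) R →+* S) (genericSeries j) = g j := by
  ext n
  rcases Nat.eq_zero_or_pos n with rfl | hn
  · simp [genericSeries, hg]
  · simp [genericSeries, hn]

lemma map_aeval_coe_prod_genericSeries_zpow [Fintype ι] [DecidableEq ι] {S : Type*} [CommRing S]
    [Algebra R S] {ψ Φ : Matrix ι ι ℤ} (hψΦ : ψ * Φ = 1) {h : ι → (PowerSeries S)ˣ}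
    (hh : ∀ k, constantCoeff (h k : PowerSeries S) = 1)
    {F : ι → (PowerSeries (MvPolynomial (ι × ℕ+) R))ˣ}
    (hF : ∀ j, (F j : PowerSeries (MvPolynomial (ι × ℕ+) R)) = genericSeries j)
    (k : ι) :
    map (MvPolynomial.aeval (R := R) fun ji : ι × ℕ+ =>
        coeff (ji.2 : ℕ) (↑(∏ l, h l ^ ψ l ji.1) : PowerSeries S) :
      MvPolynomial (ι × ℕ+) R →+* S) ↑(∏ j, F j ^ Φ j k) = h k := by
  rw [map_coe_prod_zpow _ (v := fun j => ∏ l, h l ^ ψ l j), prod_prod_zpow_zpow_of_mul_eq_one hψΦ]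
  intro j
  rw [hF j]
  exact map_aeval_genericSeries (fun j => (↑(∏ l, h l ^ ψ l j) : PowerSeries S))
    (fun j => constantCoeff_coe_prod_zpow hh _) j

noncomputable def regularGenericUnit (p : ℕ) (j : ι) :
    (PowerSeries (MvPolynomial (ι × ℕ+) R))ˣ :=
  (isUnit_iff_constantCoeff.mpr (by simp [constantCoeff_pRegularPart]) :
    IsUnit (1 + pRegularPart p (genericSeries j))).unit

lemma coe_regularGenericUnit (p : ℕ) (j : ι) :
    (regularGenericUnit (R := R) p j : PowerSeries (MvPolynomial (ι × ℕ+) R)) =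
      1 + pRegularPart p (genericSeries j) :=
  IsUnit.unit_spec _

lemma constantCoeff_regularGenericUnit (p : ℕ) (j : ι) :
    constantCoeff (regularGenericUnit (R := R) p j : PowerSeries (MvPolynomial (ι × ℕ+) R)) = 1 :=
  by simp [coe_regularGenericUnit, constantCoeff_pRegularPart]

lemma coeff_pRegularPart_genericSeries (p : ℕ) (j : ι) {n : ℕ} (hpn : ¬ p ∣ n) :
    coeff n (pRegularPart p (genericSeries j : PowerSeries (MvPolynomial (ι × ℕ+) R))) =
      MvPolynomial.X (j, ⟨n, Nat.pos_of_ne_zero fun h => hpn (h ▸ dvd_zero p)⟩) := by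
  have hn : 0 < n := Nat.pos_of_ne_zero fun h => hpn (h ▸ dvd_zero p)
  simp [coeff_pRegularPart, genericSeries, hpn, hn]

end GenericSeries

theorem stmt11_general (p : ℕ) (N M : ℕ)
    (Φ : Matrix (Fin N) (Fin N) ℤ) (hΦ : IsUnit Φ.det)
    (F : Fin N → (PowerSeries (MvPolynomial (Fin N × ℕ+) ℚ))ˣ)
    (hF : ∀ j : Fin N, (F j : PowerSeries (MvPolynomial (Fin N × ℕ+) ℚ)) =
      PowerSeries.mk fun i => if h : 0 < i then MvPolynomial.X (j, ⟨i, h⟩) else 1)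
    (X Y : Fin N → PowerSeries (MvPolynomial (Fin N × ℕ+) ℚ))
    (hX : ∀ k : Fin N, X k =
      ((∏ j : Fin N, F j ^ (Φ j k) : (PowerSeries (MvPolynomial (Fin N × ℕ+) ℚ))ˣ) :
        PowerSeries (MvPolynomial (Fin N × ℕ+) ℚ)))
    (hY : ∀ k : Fin N, (k : ℕ) < M →
      Y k * pSingularPart p (X k) = pRegularPart p (X k)) :
    AlgebraicIndependent ℚ
      (fun kn : {kn : Fin N × ℕ // (kn.1 : ℕ) < M ∧ 1 ≤ kn.2 ∧ ¬ p ∣ kn.2} =>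
        PowerSeries.coeff kn.1.2 (Y kn.1.1)) := by
  let A := MvPolynomial (Fin N × ℕ+) ℚ
  let H : Fin N → (PowerSeries A)ˣ := regularGenericUnit p
  let σ : A →ₐ[ℚ] A :=
    MvPolynomial.aeval fun ji => coeff (ji.2 : ℕ) (↑(∏ l, H l ^ Φ⁻¹ l ji.1) : PowerSeries A)
  have hXH (k : Fin N) : map (σ : A →+* A) (X k) = H k := by
    rw [hX k]
    exact map_aeval_coe_prod_genericSeries_zpow (Matrix.nonsing_inv_mul Φ hΦ)
      (constantCoeff_regularGenericUnit p) hF k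
  have hYH (k : Fin N) (hk : (k : ℕ) < M) :
      map (σ : A →+* A) (Y k) = pRegularPart p (genericSeries k) := by
    have h := congrArg (map (σ : A →+* A)) (hY k hk)
    rwa [map_mul, map_pSingularPart, map_pRegularPart, hXH, coe_regularGenericUnit,
      pSingularPart_one_add_pRegularPart, pRegularPart_one_add_pRegularPart, mul_one] at h
  refine algebraicIndependent_of_algHom_eq_X σ (e := fun kn => (kn.1.1, ⟨kn.1.2, kn.2.2.1⟩))
    (fun a b hab => Subtype.ext (Prod.ext (congrArg Prod.fst hab :) (congrArg (·.2.val) hab :)))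
    fun ⟨⟨k, n⟩, hk, _, hpn⟩ => ?_
  rw [← RingHom.coe_coe σ, ← coeff_map, hYH k hk, coeff_pRegularPart_genericSeries p k hpn]

/-- with the setup of Statement 10 (`A = ℚ[x_{j,i}]`, `Φ ∈ GL_N(ℤ)`,
`F_j = 1 + Σ_{i≥1} x_{j,i} tⁱ`, `X_k = Π_j F_j^{φ_{j,k}}`, `Y_k = V_k·U_k⁻¹ = Σ y_{k,n} tⁿ`),
the family `{y_{k,n} : 1 ≤ k ≤ M, n ≥ 1, p ∤ n}` is algebraically independent over `ℚ`. -/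
theorem stmt11 (p : ℕ) (hp : p.Prime) (N M : ℕ) (hM : 1 ≤ M) (hMN : M ≤ N)
    (Φ : Matrix (Fin N) (Fin N) ℤ) (hΦ : IsUnit Φ.det)
    (F : Fin N → (PowerSeries (MvPolynomial (Fin N × ℕ+) ℚ))ˣ)
    (hF : ∀ j : Fin N, (F j : PowerSeries (MvPolynomial (Fin N × ℕ+) ℚ)) =
      PowerSeries.mk fun i => if h : 0 < i then MvPolynomial.X (j, ⟨i, h⟩) else 1)
    (X Y : Fin N → PowerSeries (MvPolynomial (Fin N × ℕ+) ℚ))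
    (hX : ∀ k : Fin N, X k =
      ((∏ j : Fin N, F j ^ (Φ j k) : (PowerSeries (MvPolynomial (Fin N × ℕ+) ℚ))ˣ) :
        PowerSeries (MvPolynomial (Fin N × ℕ+) ℚ)))
    (hY : ∀ k : Fin N, (k : ℕ) < M →
      Y k * pSingularPart p (X k) = pRegularPart p (X k)) :
    AlgebraicIndependent ℚ
      (fun kn : {kn : Fin N × ℕ // (kn.1 : ℕ) < M ∧ 1 ≤ kn.2 ∧ ¬ p ∣ kn.2} =>
        PowerSeries.coeff kn.1.2 (Y kn.1.1)) :=
  stmt11_general p N M Φ hΦ F hF X Y hX hY
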